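/- For all disjoint nonempty subsets A, C of [n], the chain ρ_{A,C} is a cycle: ∂(ρ_{A,C}) = 0 in the ℤ/2 cubical chain complex of Ω_n. -/
import Mathlib


structure Cube where
  A : Finset ℕ
  B : Finset ℕ
  C : Finset ℕ
  D : Finset ℕ
deriving DecidableEq

def IsCube (n : ℕ) (σ : Cube) : Prop :=
  Disjoint σ.A σ.B ∧ Disjoint σ.A σ.C ∧ Disjoint σ.A σ.D ∧
  Disjoint σ.B σ.C ∧ Disjoint σ.B σ.D ∧ Disjoint σ.C σ.D ∧
  σ.A ∪ σ.B ∪ σ.C ∪ σ.D = Finset.Icc 1 n ∧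
  σ.A.Nonempty ∧ σ.C.Nonempty

def Cube.dim (σ : Cube) : ℕ := σ.B.card + σ.D.card

/-- The free `ℤ/2`-vector space on all (potential) cubes. -/
abbrev Chain := Cube →₀ ZMod 2

/-- The value of the cubical boundary operator on a single cube. -/
noncomputable def bnd1 (σ : Cube) : Chain :=
  (σ.B.sum fun x =>
      Finsupp.single ⟨insert x σ.A, σ.B.erase x, σ.C, σ.D⟩ 1
    + Finsupp.single ⟨σ.A, σ.B.erase x, insert x σ.C, σ.D⟩ 1)
  + (σ.D.sum fun x =>
      Finsupp.single ⟨insert x σ.A, σ.B, σ.C, σ.D.erase x⟩ 1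
    + Finsupp.single ⟨σ.A, σ.B, insert x σ.C, σ.D.erase x⟩ 1)

/-- The boundary operator of the `ℤ/2` cubical chain complex, extended linearly. -/
noncomputable def bnd : Chain →ₗ[ZMod 2] Chain :=
  Finsupp.linearCombination (ZMod 2) bnd1

/-- The subspace of chains supported on cubes of `Ω_n` of dimension `d`
(the chain group `C_d`). -/
noncomputable def degChains (n d : ℕ) : Submodule (ZMod 2) Chain where
  carrier := {c | ∀ σ ∈ c.support, IsCube n σ ∧ σ.dim = d}
  add_mem' := by
    intro a b ha hb σ hσ
    rcases Finset.mem_union.mp (Finsupp.support_add hσ) with h | h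
    exacts [ha σ h, hb σ h]
  zero_mem' := by intro σ hσ; simp at hσ
  smul_mem' := by intro r c hc σ hσ; exact hc σ (Finsupp.support_smul hσ)

/-- The subspace of `d`-dimensional cycles, `ker ∂_d`. -/
noncomputable def cycles (n d : ℕ) : Submodule (ZMod 2) Chain :=
  degChains n d ⊓ LinearMap.ker bnd

/-- The subspace of `d`-dimensional boundaries, `im ∂_{d+1}`. -/
noncomputable def boundaries (n d : ℕ) : Submodule (ZMod 2) Chain :=
  Submodule.map bnd (degChains n (d + 1))

/-- The boundaries, viewed inside the cycles. -/
noncomputable def boundariesIn (n d : ℕ) : Submodule (ZMod 2) (cycles n d) :=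
  (boundaries n d).comap (cycles n d).subtype

/-- The `d`-th homology of `Ω_n` over `ℤ/2`: `ker ∂_d / im ∂_{d+1}`. -/
abbrev Homology (n d : ℕ) := cycles n d ⧸ boundariesIn n d

/-- The cycle `ρ_{A,C}`: the sum of all cubes `(A,B,C,D)` with `B ∪ D = [n] ∖ (A ∪ C)`. -/
noncomputable def rho (n : ℕ) (A C : Finset ℕ) : Chain :=
  (Finset.Icc 1 n \ (A ∪ C)).powerset.sum fun B =>
    Finsupp.single ⟨A, B, C, (Finset.Icc 1 n \ (A ∪ C)) \ B⟩ 1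

/-- The cycle `γ_G`: the sum of all cubes `({i},B,{j},D)` with `i, j ∈ [a,c]`,
`D ⊆ I ∪ E` and `B ⊆ G ∪ E`, where `a = min G`, `c = max G`, `E = [n] ∖ [a,c]`,
`I = [a,c] ∖ G`. -/
noncomputable def gamma (n : ℕ) (G : Finset ℕ) : Chain :=
  let a := sInf (↑G : Set ℕ)
  let c := sSup (↑G : Set ℕ)
  let E := Finset.Icc 1 n \ Finset.Icc a c
  let I := Finset.Icc a c \ G
  ∑ i ∈ Finset.Icc a c, ∑ j ∈ Finset.Icc a c, ∑ D ∈ (I ∪ E).powerset,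
    if i ≠ j ∧ i ∉ D ∧ j ∉ D ∧ Finset.Icc 1 n \ ({i} ∪ {j} ∪ D) ⊆ G ∪ E then
      Finsupp.single ⟨{i}, Finset.Icc 1 n \ ({i} ∪ {j} ∪ D), {j}, D⟩ 1
    else 0

/-- For all disjoint nonempty `A, C ⊆ [n]`, the chain `ρ_{A,C}` is a cycle. -/
theorem rho_is_cycle (n : ℕ) (hn : 2 ≤ n) (A C : Finset ℕ)
    (hA : A ⊆ Finset.Icc 1 n) (hC : C ⊆ Finset.Icc 1 n)
    (hdisj : Disjoint A C) (hAne : A.Nonempty) (hCne : C.Nonempty) :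
    bnd (rho n A C) = 0 := by
  classical
  set S := Finset.Icc 1 n \ (A ∪ C) with hS
  have h1 : bnd (rho n A C) = ∑ B ∈ S.powerset, bnd1 ⟨A, B, C, S \ B⟩ := by
    rw [rho, map_sum]
    simp [bnd, Finsupp.linearCombination_single, hS]
  set g : Finset ℕ → ℕ → Chain := fun B x =>
    Finsupp.single ⟨insert x A, B, C, S \ insert x B⟩ 1
    + Finsupp.single ⟨A, B, insert x C, S \ insert x B⟩ 1 with hg
  have h2 : ∀ B ∈ S.powerset, bnd1 ⟨A, B, C, S \ B⟩ =
      (∑ x ∈ B, g (B.erase x) x) + ∑ x ∈ S \ B, g B x := by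
    intro B hB
    rw [bnd1]
    congr 1
    · apply Finset.sum_congr rfl; intro x hx
      have h : insert x (B.erase x) = B := Finset.insert_erase hx
      simp [hg, h]
    · apply Finset.sum_congr rfl; intro x hx
      have h : (S \ B).erase x = S \ insert x B := by
        ext y
        simp only [Finset.mem_erase, Finset.mem_sdiff, Finset.mem_insert]
        tauto
      simp [hg, h]
  rw [h1, Finset.sum_congr rfl h2, Finset.sum_add_distrib]
  have h3 : (∑ B ∈ S.powerset, ∑ x ∈ B, g (B.erase x) x)
      = ∑ B ∈ S.powerset, ∑ x ∈ S \ B, g B x := by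
    rw [Finset.sum_sigma', Finset.sum_sigma']
    apply Finset.sum_nbij' (fun p => ⟨p.1.erase p.2, p.2⟩)
      (fun p => ⟨insert p.2 p.1, p.2⟩)
    · rintro ⟨B, x⟩ hp
      simp only [Finset.mem_sigma, Finset.mem_powerset] at hp ⊢
      refine ⟨(Finset.erase_subset _ _).trans hp.1, ?_⟩
      simp only [Finset.mem_sdiff, Finset.mem_erase]
      exact ⟨hp.1 hp.2, fun h => h.1 rfl⟩
    · rintro ⟨B, x⟩ hp
      simp only [Finset.mem_sigma, Finset.mem_powerset, Finset.mem_sdiff] at hp ⊢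
      exact ⟨Finset.insert_subset hp.2.1 hp.1, Finset.mem_insert_self _ _⟩
    · rintro ⟨B, x⟩ hp
      simp only [Finset.mem_sigma, Finset.mem_powerset] at hp
      simp [Finset.insert_erase hp.2]
    · rintro ⟨B, x⟩ hp
      simp only [Finset.mem_sigma, Finset.mem_powerset, Finset.mem_sdiff] at hp
      simp [Finset.erase_insert hp.2.2]
    · rintro ⟨B, x⟩ hp
      rfl
  rw [h3, ← two_smul (ZMod 2)]
  simp [show (2 : ZMod 2) = 0 from rfl]
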